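/- arXiv:2303.05139 — 3 statements merged into one kernel-verified Lean document; each statement's English description precedes it below -/
import Mathlib

section
/- The classical and refined assume/guarantee contracts are separated by causality: let φ, ψ : ℝ → Prop be time-indexed predicates and suppose there exist times 0 ≤ t < t' such that ψ fails at t (¬ψ t), φ holds throughout the interval [0, t] (∀ s, 0 ≤ s ∧ s ≤ t → φ s), and φ fails at t' (¬φ t'). Then the trace satisfies the classical contract (∀ u ≥ 0, φ u) → (∀ u ≥ 0, ψ u), but for every horizon T ≥ 0 the trace violates the refined contract, i.e. it is not the case that for all u ≥ 0, ( (∀ s, max 0 (u − T) ≤ s ∧ s ≤ u → φ s) → ψ u ). -/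
def ClassicalContract (φ ψ : ℝ → Prop) : Prop :=
  (∀ u, 0 ≤ u → φ u) → ∀ u, 0 ≤ u → ψ u

def RefinedContract (T : ℝ) (φ ψ : ℝ → Prop) : Prop :=
  ∀ u, 0 ≤ u → (∀ s, max 0 (u - T) ≤ s ∧ s ≤ u → φ s) → ψ u

theorem classicalContract_of_not_assumption {φ : ℝ → Prop} (ψ : ℝ → Prop) {t : ℝ}
    (ht : 0 ≤ t) (hφ : ¬ φ t) : ClassicalContract φ ψ :=
  fun hall => absurd (hall t ht) hφ

theorem not_refinedContract_of_not_guarantee {φ ψ : ℝ → Prop} (T : ℝ) {t : ℝ}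
    (ht : 0 ≤ t) (hψ : ¬ ψ t) (hφ : ∀ s, 0 ≤ s ∧ s ≤ t → φ s) :
    ¬ RefinedContract T φ ψ :=
  fun h => hψ <| h t ht fun s hs => hφ s ⟨(le_max_left _ _).trans hs.1, hs.2⟩

/-- A guarantee violation occurring strictly before the first assumption
violation is vacuously forgiven by the classical contract but detected by the refined
contract, for every horizon `T ≥ 0`. -/
theorem classical_refined_contract_separation (φ ψ : ℝ → Prop) (t t' : ℝ)
    (ht : 0 ≤ t) (htt' : t < t')
    (hψ : ¬ ψ t)
    (hφ : ∀ s, 0 ≤ s ∧ s ≤ t → φ s)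
    (hφ' : ¬ φ t') :
    ((∀ u, 0 ≤ u → φ u) → (∀ u, 0 ≤ u → ψ u)) ∧
      (∀ T, 0 ≤ T →
        ¬ (∀ u, 0 ≤ u → (∀ s, max 0 (u - T) ≤ s ∧ s ≤ u → φ s) → ψ u)) :=
  ⟨classicalContract_of_not_assumption ψ (ht.trans htt'.le) hφ',
    fun T _ => not_refinedContract_of_not_guarantee T ht hψ hφ⟩
end

section
/- RSS longitudinal safety: let v_f, v_b ≥ 0 (initial speeds of the front and back vehicle), a ≥ 0 (maximum acceleration of the back vehicle during its reaction time), τ > 0 (reaction time), and braking rates 0 < b₁ ≤ b₂ (minimum braking of the back vehicle and maximum braking of the front vehicle). Define the back vehicle's worst-case position x_B(t) = v_b·t + a·t²/2 for 0 ≤ t ≤ τ; x_B(t) = x_B(τ) + (v_b + a·τ)·(t − τ) − b₁·(t − τ)²/2 for τ ≤ t ≤ T_B := τ + (v_b + a·τ)/b₁; and x_B(t) = x_B(T_B) for t ≥ T_B. Define the front vehicle's position x_F(t) = d₀ + v_f·t − b₂·t²/2 for 0 ≤ t ≤ v_f/b₂, and x_F(t) = d₀ + v_f²/(2·b₂) for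 t ≥ v_f/b₂, where d₀ is the initial gap. Let d_safe = v_b·τ + a·τ²/2 + (v_b + a·τ)²/(2·b₁) − v_f²/(2·b₂). If d₀ ≥ 0 and d₀ ≥ d_safe, then for all t ≥ 0, x_F(t) ≥ x_B(t), i.e. no collision ever occurs. -/
/-!
Track, at each time `t`, the current speeds `w` of the back vehicle and `u` of the front
vehicle. Braking at rate `b` from speed `v` covers `v² / (2b)`, so the back vehicle's
position plus `w² / (2b₁)` never exceeds its total worst-case travel `D_B`, while the front
vehicle's position plus `u² / (2b₂)` is exactly `d₀ + v_f² / (2b₂)`.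
Moreover the back vehicle never decelerates faster than `b₁`, so `x_B(t) ≤ w t + b₁ t² / 2`,
while the moving front vehicle has `x_F(t) = d₀ + u t + b₂ t² / 2`.

If `u ≤ w`, then `u² / (2b₂) ≤ w² / (2b₁)` because `b₁ ≤ b₂`, and the stopping distances give
`x_F(t) - x_B(t) ≥ d₀ - d_safe ≥ 0`. If `w < u`, comparing with the past gives
`x_B(t) ≤ w t + b₁ t² / 2 ≤ u t + b₂ t² / 2 ≤ x_F(t) - d₀`.
-/

theorem braking_displacement_add_stoppingDistance {b : ℝ} (hb : b ≠ 0) (v t : ℝ) :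
    v * t - b * t ^ 2 / 2 + (v - b * t) ^ 2 / (2 * b) = v ^ 2 / (2 * b) := by
  field_simp
  ring

theorem le_of_stopping_bounds {xB xF w u t b₁ b₂ d₀ D_B D_F : ℝ}
    (hb₁ : 0 < b₁) (hb₁b₂ : b₁ ≤ b₂) (ht : 0 ≤ t) (hd₀ : 0 ≤ d₀) (hsafe : D_B - D_F ≤ d₀)
    (hw : 0 ≤ w) (hu : 0 ≤ u)
    (hB_stop : xB + w ^ 2 / (2 * b₁) ≤ D_B) (hB_past : xB ≤ w * t + b₁ * t ^ 2 / 2)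
    (hF_stop : d₀ + D_F ≤ xF + u ^ 2 / (2 * b₂))
    (hF_past : 0 < u → d₀ + u * t + b₂ * t ^ 2 / 2 ≤ xF) :
    xB ≤ xF := by
  have hb₂ : 0 < b₂ := hb₁.trans_le hb₁b₂
  rcases le_or_gt u w with huw | hwu
  · have : u ^ 2 / (2 * b₂) ≤ w ^ 2 / (2 * b₁) :=
      calc u ^ 2 / (2 * b₂) ≤ w ^ 2 / (2 * b₂) := by gcongr
        _ ≤ w ^ 2 / (2 * b₁) := by gcongr
    linarith
  · have : w * t + b₁ * t ^ 2 / 2 ≤ u * t + b₂ * t ^ 2 / 2 := by gcongr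
    linarith [hF_past (hw.trans_lt hwu)]

section BackVehicle

variable {v_b a τ b₁ : ℝ}

theorem totalTravel_le_of_stopped (ha : 0 ≤ a) (hτ : 0 ≤ τ) (hb₁ : 0 < b₁) {t : ℝ}
    (hw : 0 ≤ v_b + a * τ) (hstop : b₁ * τ + (v_b + a * τ) ≤ b₁ * t) :
    v_b * τ + a * τ ^ 2 / 2 + (v_b + a * τ) ^ 2 / (2 * b₁) ≤ b₁ * t ^ 2 / 2 := by
  have hsq : (b₁ * τ + (v_b + a * τ)) ^ 2 ≤ (b₁ * t) ^ 2 := by gcongr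
  have hexpand : v_b * τ + a * τ ^ 2 / 2 + (v_b + a * τ) ^ 2 / (2 * b₁)
      = ((b₁ * τ + (v_b + a * τ)) ^ 2 - b₁ ^ 2 * τ ^ 2 - a * b₁ * τ ^ 2) / (2 * b₁) := by
    field_simp
    ring
  rw [hexpand, div_le_iff₀ (by positivity)]
  nlinarith [mul_nonneg (mul_nonneg ha hb₁.le) (sq_nonneg τ)]

theorem back_stopping_bounds (hvb : 0 ≤ v_b) (ha : 0 ≤ a) (hτ : 0 ≤ τ) (hb₁ : 0 < b₁)
    {xB : ℝ → ℝ}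
    (hxB₁ : ∀ t, 0 ≤ t → t ≤ τ → xB t = v_b * t + a * t ^ 2 / 2)
    (hxB₂ : ∀ t, τ ≤ t → t ≤ τ + (v_b + a * τ) / b₁ →
      xB t = xB τ + (v_b + a * τ) * (t - τ) - b₁ * (t - τ) ^ 2 / 2)
    (hxB₃ : ∀ t, τ + (v_b + a * τ) / b₁ ≤ t → xB t = xB (τ + (v_b + a * τ) / b₁))
    {t : ℝ} (ht : 0 ≤ t) :
    ∃ w, 0 ≤ w ∧
      xB t + w ^ 2 / (2 * b₁) ≤ v_b * τ + a * τ ^ 2 / 2 + (v_b + a * τ) ^ 2 / (2 * b₁) ∧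
      xB t ≤ w * t + b₁ * t ^ 2 / 2 := by
  set T := τ + (v_b + a * τ) / b₁
  have hτT : τ ≤ T := le_add_of_nonneg_right (by positivity)
  have hxBτ : xB τ = v_b * τ + a * τ ^ 2 / 2 := hxB₁ τ hτ le_rfl
  have hbraking : ∀ s, τ ≤ s → s ≤ T → xB s + (v_b + a * τ - b₁ * (s - τ)) ^ 2 / (2 * b₁)
      = v_b * τ + a * τ ^ 2 / 2 + (v_b + a * τ) ^ 2 / (2 * b₁) := by
    intro s hτs hsT
    rw [hxB₂ s hτs hsT, hxBτ, add_sub_assoc, add_assoc,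
      braking_displacement_add_stoppingDistance hb₁.ne']
  have hxBT : xB T = v_b * τ + a * τ ^ 2 / 2 + (v_b + a * τ) ^ 2 / (2 * b₁) := by
    simpa [T, mul_div_cancel₀ _ hb₁.ne'] using hbraking T hτT le_rfl
  rcases le_total t τ with htτ | hτt
  · refine ⟨v_b + a * t, by positivity, ?_, ?_⟩ <;> rw [hxB₁ t ht htτ]
    · gcongr
    · nlinarith [mul_nonneg ha (sq_nonneg t), mul_nonneg hb₁.le (sq_nonneg t)]
  rcases le_total t T with htT | hTt
  · have hmoving : b₁ * (t - τ) ≤ v_b + a * τ :=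
      (le_div_iff₀' hb₁).mp (show t - τ ≤ (v_b + a * τ) / b₁ by linarith)
    refine ⟨v_b + a * τ - b₁ * (t - τ), sub_nonneg.mpr hmoving, (hbraking t hτt htT).le, ?_⟩
    rw [hxB₂ t hτt htT, hxBτ]
    nlinarith [mul_nonneg ha (sq_nonneg τ)]
  · refine ⟨0, le_rfl, by simp [hxB₃ t hTt, hxBT], ?_⟩
    have hstop : b₁ * τ + (v_b + a * τ) ≤ b₁ * t := by
      have := (div_le_iff₀' hb₁).mp (show (v_b + a * τ) / b₁ ≤ t - τ by linarith)
      linarith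
    rw [hxB₃ t hTt, hxBT, zero_mul, zero_add]
    exact totalTravel_le_of_stopped ha hτ hb₁ (by positivity) hstop

end BackVehicle

theorem front_stopping_bounds {v_f b₂ d₀ : ℝ} (hb₂ : 0 < b₂) {xF : ℝ → ℝ}
    (hxF₁ : ∀ t, 0 ≤ t → t ≤ v_f / b₂ → xF t = d₀ + v_f * t - b₂ * t ^ 2 / 2)
    (hxF₂ : ∀ t, v_f / b₂ ≤ t → xF t = d₀ + v_f ^ 2 / (2 * b₂)) {t : ℝ} (ht : 0 ≤ t) :
    ∃ u, 0 ≤ u ∧ d₀ + v_f ^ 2 / (2 * b₂) ≤ xF t + u ^ 2 / (2 * b₂) ∧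
      (0 < u → d₀ + u * t + b₂ * t ^ 2 / 2 ≤ xF t) := by
  rcases le_total t (v_f / b₂) with htT | hTt
  · refine ⟨v_f - b₂ * t, sub_nonneg.mpr ((le_div_iff₀' hb₂).mp htT), ?_, fun _ ↦ ?_⟩ <;>
      rw [hxF₁ t ht htT]
    · rw [add_sub_assoc, add_assoc, braking_displacement_add_stoppingDistance hb₂.ne']
    · linarith
  · exact ⟨0, le_rfl, by simp [hxF₂ t hTt], fun h ↦ (lt_irrefl 0 h).elim⟩

theorem rss_longitudinal_safety_general (v_f v_b a τ b₁ b₂ d₀ : ℝ)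
    (hvb : 0 ≤ v_b) (ha : 0 ≤ a) (hτ : 0 < τ)
    (hb₁ : 0 < b₁) (hb₁b₂ : b₁ ≤ b₂)
    (xB xF : ℝ → ℝ)
    -- back vehicle: accelerates at rate `a` during the reaction time `[0, τ]`
    (hxB₁ : ∀ t, 0 ≤ t → t ≤ τ → xB t = v_b * t + a * t ^ 2 / 2)
    -- then brakes at rate `b₁` until stopping at time `T_B = τ + (v_b + a·τ)/b₁`
    (hxB₂ : ∀ t, τ ≤ t → t ≤ τ + (v_b + a * τ) / b₁ →
      xB t = xB τ + (v_b + a * τ) * (t - τ) - b₁ * (t - τ) ^ 2 / 2)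
    -- and remains stationary afterwards
    (hxB₃ : ∀ t, τ + (v_b + a * τ) / b₁ ≤ t → xB t = xB (τ + (v_b + a * τ) / b₁))
    -- front vehicle: brakes at rate `b₂` until stopping at time `v_f/b₂`
    (hxF₁ : ∀ t, 0 ≤ t → t ≤ v_f / b₂ → xF t = d₀ + v_f * t - b₂ * t ^ 2 / 2)
    -- and remains stationary afterwards
    (hxF₂ : ∀ t, v_f / b₂ ≤ t → xF t = d₀ + v_f ^ 2 / (2 * b₂))
    (hd₀ : 0 ≤ d₀)
    (hsafe : v_b * τ + a * τ ^ 2 / 2 + (v_b + a * τ) ^ 2 / (2 * b₁)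
      - v_f ^ 2 / (2 * b₂) ≤ d₀) :
    ∀ t, 0 ≤ t → xB t ≤ xF t := by
  intro t ht
  obtain ⟨w, hw, hB_stop, hB_past⟩ :=
    back_stopping_bounds hvb ha hτ.le hb₁ hxB₁ hxB₂ hxB₃ ht
  obtain ⟨u, hu, hF_stop, hF_past⟩ :=
    front_stopping_bounds (hb₁.trans_le hb₁b₂) hxF₁ hxF₂ ht
  exact le_of_stopping_bounds hb₁ hb₁b₂ ht hd₀ hsafe hw hu hB_stop hB_past hF_stop hF_past

/-- RSS longitudinal safety. If the initial gap `d₀` is nonnegative and at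
least the RSS safe distance `d_safe`, then the back vehicle's worst-case trajectory never
overtakes the front vehicle's trajectory: no collision ever occurs. -/
theorem rss_longitudinal_safety (v_f v_b a τ b₁ b₂ d₀ : ℝ)
    (hvf : 0 ≤ v_f) (hvb : 0 ≤ v_b) (ha : 0 ≤ a) (hτ : 0 < τ)
    (hb₁ : 0 < b₁) (hb₁b₂ : b₁ ≤ b₂)
    (xB xF : ℝ → ℝ)
    -- back vehicle: accelerates at rate `a` during the reaction time `[0, τ]`
    (hxB₁ : ∀ t, 0 ≤ t → t ≤ τ → xB t = v_b * t + a * t ^ 2 / 2)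
    -- then brakes at rate `b₁` until stopping at time `T_B = τ + (v_b + a·τ)/b₁`
    (hxB₂ : ∀ t, τ ≤ t → t ≤ τ + (v_b + a * τ) / b₁ →
      xB t = xB τ + (v_b + a * τ) * (t - τ) - b₁ * (t - τ) ^ 2 / 2)
    -- and remains stationary afterwards
    (hxB₃ : ∀ t, τ + (v_b + a * τ) / b₁ ≤ t → xB t = xB (τ + (v_b + a * τ) / b₁))
    -- front vehicle: brakes at rate `b₂` until stopping at time `v_f/b₂`
    (hxF₁ : ∀ t, 0 ≤ t → t ≤ v_f / b₂ → xF t = d₀ + v_f * t - b₂ * t ^ 2 / 2)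
    -- and remains stationary afterwards
    (hxF₂ : ∀ t, v_f / b₂ ≤ t → xF t = d₀ + v_f ^ 2 / (2 * b₂))
    (hd₀ : 0 ≤ d₀)
    (hsafe : v_b * τ + a * τ ^ 2 / 2 + (v_b + a * τ) ^ 2 / (2 * b₁)
      - v_f ^ 2 / (2 * b₂) ≤ d₀) :
    ∀ t, 0 ≤ t → xB t ≤ xF t :=
  rss_longitudinal_safety_general v_f v_b a τ b₁ b₂ d₀ hvb ha hτ hb₁ hb₁b₂ xB xF hxB₁ hxB₂ hxB₃ hxF₁
    hxF₂ hd₀ hsafe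
end

section
/- The longitudinal gap attains its minimum at the initial time or in the stopped limit: let v_f, v_b ≥ 0, a ≥ 0, τ > 0, and 0 < b₁ ≤ b₂. With x_B the back vehicle's trajectory (x_B(t) = v_b·t + a·t²/2 for 0 ≤ t ≤ τ; x_B(t) = x_B(τ) + (v_b + a·τ)·(t − τ) − b₁·(t − τ)²/2 for τ ≤ t ≤ T_B := τ + (v_b + a·τ)/b₁; x_B(t) = x_B(T_B) for t ≥ T_B) and x_F the front vehicle's trajectory (x_F(t) = d₀ + v_f·t − b₂·t²/2 for 0 ≤ t ≤ v_f/b₂; x_F(t) = d₀ + v_f²/(2·b₂) for t ≥ v_f/b₂) for any d₀ ∈ ℝ, the gap g(t) = x_F(t) − x_B(t) satisfies, for all t ≥ 0: g(t) ≥ min( g(0), d₀ − d_safe ), where d_safe = v_b·τ + a·τ²/2 + (v_b + a·τ)²/(2·b₁) − v_f²/(2·b₂) and g(0) = d₀. -/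
/-!
Let `v_F(t)` and `v_B(t)` be the speeds of the two vehicles at time `t`.

If `v_F(t) ≤ v_B(t)`, the back vehicle still has to travel at least `v_B(t)²/(2b₁)` before it
stops, while the front vehicle travels exactly `v_F(t)²/(2b₂) ≤ v_B(t)²/(2b₁)`; so the gap at `t`
is at least its stopped limit `d₀ - d_safe`.

If `v_F(t) > v_B(t)`, the front vehicle is still braking at time `t`. Since `b₁ ≤ b₂`, the speed
difference `v_F - v_B` is nonincreasing as long as the front vehicle moves, so the front vehicle
was the faster one on all of `[0, t]`: it has covered at least as much ground, and the gap at `t`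
is at least `d₀`.
-/

noncomputable def frontSpeed (v_f b₂ t : ℝ) : ℝ := max (v_f - b₂ * t) 0

noncomputable def backSpeed (v_b a τ b₁ t : ℝ) : ℝ :=
  if t ≤ τ then v_b + a * t else max (v_b + a * τ - b₁ * (t - τ)) 0

noncomputable def backStopPos (v_b a τ b₁ : ℝ) : ℝ :=
  v_b * τ + a * τ ^ 2 / 2 + (v_b + a * τ) ^ 2 / (2 * b₁)

structure IsFrontTrajectory (v_f b₂ d₀ : ℝ) (xF : ℝ → ℝ) : Prop where
  braking : ∀ t, 0 ≤ t → t ≤ v_f / b₂ → xF t = d₀ + v_f * t - b₂ * t ^ 2 / 2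
  stopped : ∀ t, v_f / b₂ ≤ t → xF t = d₀ + v_f ^ 2 / (2 * b₂)

structure IsBackTrajectory (v_b a τ b₁ : ℝ) (xB : ℝ → ℝ) : Prop where
  reaction : ∀ t, 0 ≤ t → t ≤ τ → xB t = v_b * t + a * t ^ 2 / 2
  braking : ∀ t, τ ≤ t → t ≤ τ + (v_b + a * τ) / b₁ →
    xB t = xB τ + (v_b + a * τ) * (t - τ) - b₁ * (t - τ) ^ 2 / 2
  stopped : ∀ t, τ + (v_b + a * τ) / b₁ ≤ t → xB t = xB (τ + (v_b + a * τ) / b₁)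

section

variable {v_f v_b a τ b₁ b₂ d₀ t : ℝ} {xF xB : ℝ → ℝ}

theorem IsFrontTrajectory.eq_sub_frontSpeed_sq (hF : IsFrontTrajectory v_f b₂ d₀ xF)
    (hb₂ : 0 < b₂) (ht : 0 ≤ t) :
    xF t = d₀ + v_f ^ 2 / (2 * b₂) - frontSpeed v_f b₂ t ^ 2 / (2 * b₂) := by
  rcases le_total t (v_f / b₂) with h | h
  · have hv : 0 ≤ v_f - b₂ * t := by rw [le_div_iff₀ hb₂] at h; linarith
    rw [hF.braking t ht h, frontSpeed, max_eq_left hv]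
    field_simp
    ring
  · have hv : v_f - b₂ * t ≤ 0 := by rw [div_le_iff₀ hb₂] at h; linarith
    rw [hF.stopped t h, frontSpeed, max_eq_right hv]
    ring

theorem backSpeed_nonneg (hvb : 0 ≤ v_b) (ha : 0 ≤ a) (ht : 0 ≤ t) :
    0 ≤ backSpeed v_b a τ b₁ t := by
  unfold backSpeed
  split_ifs
  · positivity
  · exact le_max_right _ _

theorem backSpeed_of_le (h : t ≤ τ) : backSpeed v_b a τ b₁ t = v_b + a * t := if_pos h

theorem backSpeed_of_braking (hb₁ : 0 < b₁) (h₁ : τ ≤ t) (h₂ : t ≤ τ + (v_b + a * τ) / b₁) :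
    backSpeed v_b a τ b₁ t = v_b + a * τ - b₁ * (t - τ) := by
  unfold backSpeed
  split_ifs with h
  · obtain rfl := le_antisymm h h₁
    ring
  · have hu : t - τ ≤ (v_b + a * τ) / b₁ := by linarith
    rw [le_div_iff₀' hb₁] at hu
    exact max_eq_left (by linarith)

theorem backSpeed_of_stopped (hw : 0 ≤ v_b + a * τ) (hb₁ : 0 < b₁)
    (h : τ + (v_b + a * τ) / b₁ ≤ t) : backSpeed v_b a τ b₁ t = 0 := by
  have hT : 0 ≤ (v_b + a * τ) / b₁ := by positivity
  unfold backSpeed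
  split_ifs with h'
  · have htτ : t = τ := by linarith
    have hw₀ : (v_b + a * τ) / b₁ = 0 := by linarith
    rw [htτ]
    simpa [hb₁.ne'] using hw₀
  · have hu : (v_b + a * τ) / b₁ ≤ t - τ := by linarith
    rw [div_le_iff₀' hb₁] at hu
    exact max_eq_right (by linarith)

namespace IsBackTrajectory

theorem eq_backStopPos (hB : IsBackTrajectory v_b a τ b₁ xB) (hτ : 0 ≤ τ)
    (hw : 0 ≤ v_b + a * τ) (hb₁ : 0 < b₁) (h : τ + (v_b + a * τ) / b₁ ≤ t) :
    xB t = backStopPos v_b a τ b₁ := by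
  have hτT : τ ≤ τ + (v_b + a * τ) / b₁ := le_add_of_nonneg_right (by positivity)
  rw [hB.stopped t h, hB.braking _ hτT le_rfl, hB.reaction τ hτ le_rfl, backStopPos]
  field_simp
  ring

theorem backSpeed_sq_div_le (hB : IsBackTrajectory v_b a τ b₁ xB) (hvb : 0 ≤ v_b) (ha : 0 ≤ a)
    (hτ : 0 ≤ τ) (hb₁ : 0 < b₁) (ht : 0 ≤ t) :
    backSpeed v_b a τ b₁ t ^ 2 / (2 * b₁) ≤ backStopPos v_b a τ b₁ - xB t := by
  have hw : 0 ≤ v_b + a * τ := by positivity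
  rcases le_total t τ with h₁ | h₁
  · rw [backSpeed_of_le h₁, hB.reaction t ht h₁, backStopPos]
    have hspeed : (v_b + a * t) ^ 2 / (2 * b₁) ≤ (v_b + a * τ) ^ 2 / (2 * b₁) := by
      gcongr
    have hpos : v_b * t + a * t ^ 2 / 2 ≤ v_b * τ + a * τ ^ 2 / 2 := by gcongr
    linarith
  rcases le_total t (τ + (v_b + a * τ) / b₁) with h₂ | h₂
  · rw [backSpeed_of_braking hb₁ h₁ h₂, hB.braking t h₁ h₂, hB.reaction τ hτ le_rfl, backStopPos]
    apply le_of_eq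
    field_simp
    ring
  · rw [backSpeed_of_stopped hw hb₁ h₂, hB.eq_backStopPos hτ hw hb₁ h₂]
    simp

theorem le_of_speed_le_of_braking (hB : IsBackTrajectory v_b a τ b₁ xB) (ha : 0 ≤ a) (hτ : 0 ≤ τ)
    (hb₁ : 0 ≤ b₁) (hb₁b₂ : b₁ ≤ b₂) (h₁ : τ ≤ t) (h₂ : t ≤ τ + (v_b + a * τ) / b₁)
    (h : v_b + a * τ - b₁ * (t - τ) ≤ v_f - b₂ * t) :
    xB t ≤ v_f * t - b₂ * t ^ 2 / 2 := by
  rw [hB.braking t h₁ h₂, hB.reaction τ hτ le_rfl]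
  have key : v_f * t - b₂ * t ^ 2 / 2
      - (v_b * τ + a * τ ^ 2 / 2 + (v_b + a * τ) * (t - τ) - b₁ * (t - τ) ^ 2 / 2)
      = (v_f - b₂ * t - (v_b + a * τ - b₁ * (t - τ))) * t
        + (b₂ - b₁) * (t - τ) * (t + τ) / 2 + (a + b₂) * τ ^ 2 / 2 := by ring
  have hδ : 0 ≤ (v_f - b₂ * t - (v_b + a * τ - b₁ * (t - τ))) * t :=
    mul_nonneg (by linarith) (hτ.trans h₁)
  have hb : 0 ≤ (b₂ - b₁) * (t - τ) * (t + τ) / 2 := by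
    have := mul_nonneg (mul_nonneg (sub_nonneg.2 hb₁b₂) (sub_nonneg.2 h₁))
      (by linarith : 0 ≤ t + τ)
    linarith
  have ha' : 0 ≤ (a + b₂) * τ ^ 2 / 2 := by
    have : 0 ≤ a + b₂ := by linarith
    positivity
  linarith

theorem le_of_backSpeed_le (hB : IsBackTrajectory v_b a τ b₁ xB) (hvb : 0 ≤ v_b) (ha : 0 ≤ a)
    (hτ : 0 ≤ τ) (hb₁ : 0 < b₁) (hb₁b₂ : b₁ ≤ b₂) (ht : 0 ≤ t)
    (h : backSpeed v_b a τ b₁ t ≤ v_f - b₂ * t) :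
    xB t ≤ v_f * t - b₂ * t ^ 2 / 2 := by
  have hw : 0 ≤ v_b + a * τ := by positivity
  rcases le_total t τ with h₁ | h₁
  · rw [backSpeed_of_le h₁] at h
    rw [hB.reaction t ht h₁]
    nlinarith [mul_nonneg ht (sub_nonneg.2 h), mul_nonneg (add_nonneg ha (hb₁.le.trans hb₁b₂))
      (sq_nonneg t)]
  rcases le_total t (τ + (v_b + a * τ) / b₁) with h₂ | h₂
  · rw [backSpeed_of_braking hb₁ h₁ h₂] at h
    exact hB.le_of_speed_le_of_braking ha hτ hb₁.le hb₁b₂ h₁ h₂ h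
  · set T := τ + (v_b + a * τ) / b₁
    rw [backSpeed_of_stopped hw hb₁ h₂] at h
    have hτT : τ ≤ T := le_add_of_nonneg_right (by positivity)
    have hstop : v_b + a * τ - b₁ * (T - τ) = 0 := by
      simp only [T, add_sub_cancel_left]
      field_simp
      ring
    have hT : xB T ≤ v_f * T - b₂ * T ^ 2 / 2 :=
      hB.le_of_speed_le_of_braking ha hτ hb₁.le hb₁b₂ hτT le_rfl
        (by rw [hstop]; nlinarith [hb₁.le.trans hb₁b₂])
    calc xB t = xB T := hB.stopped t h₂
      _ ≤ v_f * T - b₂ * T ^ 2 / 2 := hT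
      _ ≤ v_f * t - b₂ * t ^ 2 / 2 := by
        nlinarith [mul_nonneg (sub_nonneg.2 h₂) h, mul_nonneg (hb₁.le.trans hb₁b₂)
          (sq_nonneg (t - T))]

end IsBackTrajectory

theorem stopped_limit_le_gap (hF : IsFrontTrajectory v_f b₂ d₀ xF)
    (hB : IsBackTrajectory v_b a τ b₁ xB) (hvb : 0 ≤ v_b) (ha : 0 ≤ a) (hτ : 0 ≤ τ)
    (hb₁ : 0 < b₁) (hb₁b₂ : b₁ ≤ b₂) (ht : 0 ≤ t)
    (hslow : frontSpeed v_f b₂ t ≤ backSpeed v_b a τ b₁ t) :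
    d₀ - (backStopPos v_b a τ b₁ - v_f ^ 2 / (2 * b₂)) ≤ xF t - xB t := by
  have hb₂ : 0 < b₂ := hb₁.trans_le hb₁b₂
  have hsq : frontSpeed v_f b₂ t ^ 2 / (2 * b₂) ≤ backSpeed v_b a τ b₁ t ^ 2 / (2 * b₁) :=
    calc frontSpeed v_f b₂ t ^ 2 / (2 * b₂) ≤ backSpeed v_b a τ b₁ t ^ 2 / (2 * b₂) := by
          gcongr
          exact le_max_right _ _
      _ ≤ backSpeed v_b a τ b₁ t ^ 2 / (2 * b₁) := by gcongr
  rw [hF.eq_sub_frontSpeed_sq hb₂ ht]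
  linarith [hB.backSpeed_sq_div_le hvb ha hτ hb₁ ht]

theorem initial_gap_le_gap (hF : IsFrontTrajectory v_f b₂ d₀ xF)
    (hB : IsBackTrajectory v_b a τ b₁ xB) (hvb : 0 ≤ v_b) (ha : 0 ≤ a) (hτ : 0 ≤ τ)
    (hb₁ : 0 < b₁) (hb₁b₂ : b₁ ≤ b₂) (ht : 0 ≤ t)
    (hfast : backSpeed v_b a τ b₁ t < frontSpeed v_f b₂ t) :
    d₀ ≤ xF t - xB t := by
  have hb₂ : 0 < b₂ := hb₁.trans_le hb₁b₂
  have hB₀ := backSpeed_nonneg (τ := τ) (b₁ := b₁) hvb ha ht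
  have hv : backSpeed v_b a τ b₁ t < v_f - b₂ * t :=
    (lt_max_iff.1 hfast).resolve_right hB₀.not_gt
  have htF : t ≤ v_f / b₂ := by
    rw [le_div_iff₀ hb₂]
    linarith
  rw [hF.braking t ht htF]
  linarith [hB.le_of_backSpeed_le hvb ha hτ hb₁ hb₁b₂ ht hv.le]

end

/-- The longitudinal gap `g(t) = x_F(t) - x_B(t)` attains its minimum at the
initial time or in the stopped limit: for all `t ≥ 0`,
`g(t) ≥ min (g 0) (d₀ - d_safe)`, where `g 0 = d₀` and
`d_safe = v_b·τ + a·τ²/2 + (v_b + a·τ)²/(2·b₁) - v_f²/(2·b₂)`. -/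
theorem gap_min_at_initial_or_stopped (v_f v_b a τ b₁ b₂ d₀ : ℝ)
    (hvf : 0 ≤ v_f) (hvb : 0 ≤ v_b) (ha : 0 ≤ a) (hτ : 0 < τ)
    (hb₁ : 0 < b₁) (hb₁b₂ : b₁ ≤ b₂)
    (xB xF : ℝ → ℝ)
    -- back vehicle: accelerates at rate `a` during the reaction time `[0, τ]`
    (hxB₁ : ∀ t, 0 ≤ t → t ≤ τ → xB t = v_b * t + a * t ^ 2 / 2)
    -- then brakes at rate `b₁` until stopping at time `T_B = τ + (v_b + a·τ)/b₁`
    (hxB₂ : ∀ t, τ ≤ t → t ≤ τ + (v_b + a * τ) / b₁ →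
      xB t = xB τ + (v_b + a * τ) * (t - τ) - b₁ * (t - τ) ^ 2 / 2)
    -- and remains stationary afterwards
    (hxB₃ : ∀ t, τ + (v_b + a * τ) / b₁ ≤ t → xB t = xB (τ + (v_b + a * τ) / b₁))
    -- front vehicle: brakes at rate `b₂` until stopping at time `v_f/b₂`
    (hxF₁ : ∀ t, 0 ≤ t → t ≤ v_f / b₂ → xF t = d₀ + v_f * t - b₂ * t ^ 2 / 2)
    -- and remains stationary afterwards
    (hxF₂ : ∀ t, v_f / b₂ ≤ t → xF t = d₀ + v_f ^ 2 / (2 * b₂)) :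
    ∀ t, 0 ≤ t →
      min (xF 0 - xB 0)
          (d₀ - (v_b * τ + a * τ ^ 2 / 2 + (v_b + a * τ) ^ 2 / (2 * b₁)
            - v_f ^ 2 / (2 * b₂)))
        ≤ xF t - xB t := by
  have hF : IsFrontTrajectory v_f b₂ d₀ xF := ⟨hxF₁, hxF₂⟩
  have hB : IsBackTrajectory v_b a τ b₁ xB := ⟨hxB₁, hxB₂, hxB₃⟩
  have hgap₀ : xF 0 - xB 0 = d₀ := by
    rw [hxF₁ 0 le_rfl (div_nonneg hvf (hb₁.le.trans hb₁b₂)), hxB₁ 0 le_rfl hτ.le]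
    ring
  intro t ht
  rw [hgap₀]
  rcases le_or_gt (frontSpeed v_f b₂ t) (backSpeed v_b a τ b₁ t) with hslow | hfast
  · exact (min_le_right _ _).trans
      (stopped_limit_le_gap hF hB hvb ha hτ.le hb₁ hb₁b₂ ht hslow)
  · exact (min_le_left _ _).trans
      (initial_gap_le_gap hF hB hvb ha hτ.le hb₁ hb₁b₂ ht hfast)
end
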